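/- arXiv:2006.09298 — 2 statements merged into one kernel-verified Lean document; each statement's English description precedes it below -/
import Mathlib

section
/- Single-big-jump decomposition bound: with E₂(t) := Σ_{n=1}^t n E[1{S_n > γt} 1{T_n = t}], and for 0 < γ < η < 1, E₂(t) = Σ_{s≥1} E[N_{t−s} U_{t−s}] 1{γt < s ≤ ηt} p_o(s) + E[1{γt < S₁ ≤ ηt} U_t] + E[1{S₁ > ηt} N_t U_t], where E[U_0 N_0] is interpreted as 0 and where the second and third summands correspond to the case n = 1 and to the first waiting time exceeding ηt, respectively. -/
/-!
By exchangeability, `S (n-1)` may be replaced by the first waiting time `S 0` in each summand of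
`E₂(t)`, and since `n ↦ T n` is strictly increasing, `N_t U_t = ∑ₙ n 1{T n = t}` pathwise; hence
`E₂(t) = E[1{S₀ > γt} N_t U_t]`, which splits along `S₀ ≤ ηt` and `S₀ > ηt`. On `{S₀ = s}` the
process regenerates: `N_t - 1` and `U_t` become the counting and hitting variables at time `t - s`
of the shifted i.i.d. sequence `(S (i+1))ᵢ`, which is independent of `S₀` and has the same law as
`S`. This gives `E[1{S₀ = s} (N_t - 1) U_t] = p_o(s) E[N_{t-s} U_{t-s}]` for `s ≥ 1`.
-/

open Filter Topology MeasureTheory ProbabilityTheory Finset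

section RenewalProcess

variable {Ω : Type*}

-- `T n`, `N t` and `U t` of the statement.
def renewalTime (S : ℕ → Ω → ℕ) (n : ℕ) (ω : Ω) : ℕ := ∑ i ∈ range n, S i ω

def renewalCount (S : ℕ → Ω → ℕ) (t : ℕ) (ω : Ω) : ℝ :=
  ∑ n ∈ Icc 1 t, if renewalTime S n ω ≤ t then 1 else 0

def renewalHit (S : ℕ → Ω → ℕ) (t : ℕ) (ω : Ω) : ℝ :=
  ∑ n ∈ Icc 1 t, if renewalTime S n ω = t then 1 else 0

theorem StrictMono.sum_ite_le_mul_sum_ite_eq {a : ℕ → ℕ} (ha : StrictMono a) (t : ℕ) :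
    (∑ m ∈ Icc 1 t, if a m ≤ t then (1 : ℝ) else 0) *
        (∑ n ∈ Icc 1 t, if a n = t then (1 : ℝ) else 0) =
      ∑ n ∈ Icc 1 t, (n : ℝ) * if a n = t then 1 else 0 := by
  have key : ∀ m n, (if a m ≤ t then (1 : ℝ) else 0) * (if a n = t then 1 else 0) =
      (if m ≤ n then 1 else 0) * (if a n = t then 1 else 0) := by
    intro m n
    by_cases hn : a n = t
    · simp only [← hn, ha.le_iff_le]
    · simp [hn]
  rw [sum_mul_sum, sum_comm]
  refine sum_congr rfl fun n hn => ?_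
  simp only [key, ← sum_mul, ← sum_filter]
  have : {m ∈ Icc 1 t | m ≤ n} = Icc 1 n := by
    ext m; simp only [mem_filter, mem_Icc]; have := (mem_Icc.1 hn).2; omega
  simp [this]

theorem sum_Icc_pred_mul_eq_of_lt {f : ℕ → ℝ} {k t : ℕ} (hf : ∀ m, k < m → f m = 0)
    (hk : k < t) :
    ∑ n ∈ Icc 1 t, ((n : ℝ) - 1) * f (n - 1) = ∑ m ∈ Icc 1 k, (m : ℝ) * f m := by
  have hshift : ∑ n ∈ Icc 1 t, ((n : ℝ) - 1) * f (n - 1) = ∑ m ∈ range t, (m : ℝ) * f m := by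
    rw [← Ico_add_one_right_eq_Icc, sum_Ico_eq_sum_range]
    simp [add_comm]
  rw [hshift]
  symm
  refine sum_subset (fun m hm => ?_) fun m _ hm => ?_
  · simp only [mem_Icc, mem_range] at hm ⊢; omega
  · rcases Nat.eq_zero_or_pos m with rfl | hm0
    · simp
    · rw [hf m (by simp only [mem_Icc, not_and, not_le] at hm; exact hm hm0), mul_zero]

section Pathwise

variable {S : ℕ → Ω → ℕ} (hpos : ∀ i ω, 1 ≤ S i ω)
include hpos

theorem renewalTime_strictMono (ω : Ω) : StrictMono (renewalTime S · ω) :=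
  strictMono_nat_of_lt_succ fun n => by
    simp only [renewalTime, sum_range_succ]; have := hpos n ω; omega

theorem renewalCount_mul_renewalHit (t : ℕ) (ω : Ω) :
    renewalCount S t ω * renewalHit S t ω =
      ∑ n ∈ Icc 1 t, (n : ℝ) * if renewalTime S n ω = t then 1 else 0 :=
  (renewalTime_strictMono hpos ω).sum_ite_le_mul_sum_ite_eq t

end Pathwise

section Integrals

variable [MeasurableSpace Ω] {μ : Measure Ω}

theorem integral_ite_one {P : Ω → Prop} [DecidablePred P] (hP : MeasurableSet {ω | P ω}) :
    ∫ ω, (if P ω then (1 : ℝ) else 0) ∂μ = μ.real {ω | P ω} := by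
  simpa [Set.indicator_apply] using integral_indicator_one (μ := μ) hP

theorem integral_sum_mul_ite [IsFiniteMeasure μ] {ι : Type*} (I : Finset ι) (w : ι → ℝ)
    {P : ι → Ω → Prop} [∀ i ω, Decidable (P i ω)] (hP : ∀ i, MeasurableSet {ω | P i ω}) :
    ∫ ω, ∑ i ∈ I, w i * (if P i ω then 1 else 0) ∂μ = ∑ i ∈ I, w i * μ.real {ω | P i ω} := by
  have hint : ∀ i, Integrable (fun ω => if P i ω then (1 : ℝ) else 0) μ := fun i => by
    refine ((integrable_const (μ := μ) (1 : ℝ)).indicator (hP i)).congr (ae_of_all _ fun ω => ?_)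
    simp [Set.indicator_apply]
  rw [integral_finsetSum _ fun i _ => (hint i).const_mul (w i)]
  simp only [integral_const_mul, integral_ite_one (hP _)]

end Integrals

section IID

variable [MeasurableSpace Ω] {μ : Measure Ω} {S : ℕ → Ω → ℕ}

theorem measurable_renewalTime (hmeas : ∀ i, Measurable (S i)) (n : ℕ) :
    Measurable (renewalTime S n) :=
  Finset.measurable_sum _ fun i _ => hmeas i

variable (hmeas : ∀ i, Measurable (S i)) (hindep : iIndepFun S μ)
  (hident : ∀ i, μ.map (S i) = μ.map (S 0))
include hmeas hindep hident

theorem identDistrib_comp_of_injective {g : ℕ → ℕ} (hg : g.Injective) :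
    IdentDistrib (fun ω i => S (g i) ω) (fun ω i => S i ω) μ μ :=
  .pi (fun i => ⟨(hmeas _).aemeasurable, (hmeas i).aemeasurable, (hident _).trans (hident i).symm⟩)
    (hindep.precomp hg) hindep

theorem identDistrib_prodMk_renewalTime {j n : ℕ} (hj : j < n) :
    IdentDistrib (fun ω => (S j ω, renewalTime S n ω)) (fun ω => (S 0 ω, renewalTime S n ω))
      μ μ := by
  have hswap : ∀ x : ℕ → ℕ, ∑ i ∈ range n, x (Equiv.swap 0 j i) = ∑ i ∈ range n, x i :=
    fun x => Equiv.Perm.sum_comp _ _ _ fun i hi => by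
      have := Equiv.swap_apply_ne_self_iff.1 hi
      simp only [coe_range, Set.mem_Iio]; omega
  have := (identDistrib_comp_of_injective hmeas hindep hident (Equiv.swap 0 j).injective).comp
    (u := fun x : ℕ → ℕ => (x 0, ∑ i ∈ range n, x i)) (by fun_prop)
  convert this using 1 <;> funext ω <;> simp [renewalTime, hswap (S · ω)]

theorem measureReal_eq_and_renewalTime_succ_eq {s k : ℕ} (hsk : s ≤ k) (m : ℕ) :
    μ.real {ω | S 0 ω = s ∧ renewalTime S (m + 1) ω = k} =
      μ.real {ω | S 0 ω = s} * μ.real {ω | renewalTime S m ω = k - s} := by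
  set R : Ω → ℕ := fun ω => ∑ i ∈ range m, S (i + 1) ω
  have hset : {ω | S 0 ω = s ∧ renewalTime S (m + 1) ω = k} = S 0 ⁻¹' {s} ∩ R ⁻¹' {k - s} := by
    ext ω
    simp only [renewalTime, sum_range_succ', Set.mem_ofPred_eq, Set.mem_inter_iff,
      Set.mem_preimage, Set.mem_singleton_iff, R]
    omega
  have hindep' : IndepFun R (S 0) μ := by
    have := hindep.indepFun_finsetSum_of_notMem hmeas
      (s := (range m).map ⟨Nat.succ, Nat.succ_injective⟩) (i := 0) (by simp)
    convert this using 1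
    ext ω; simp [R]
  have hlaw : μ (R ⁻¹' {k - s}) = μ {ω | renewalTime S m ω = k - s} :=
    ((identDistrib_comp_of_injective hmeas hindep hident Nat.succ_injective).comp
      (u := fun x : ℕ → ℕ => ∑ i ∈ range m, x i) (by fun_prop)).measure_mem_eq
      (measurableSet_singleton _)
  rw [hset, Set.inter_comm, measureReal_def, hindep'.measure_inter_preimage_eq_mul _ _
    (measurableSet_singleton _) (measurableSet_singleton _), hlaw, ENNReal.toReal_mul, mul_comm]
  rfl

theorem measureReal_and_renewalTime_eq_sum (c : ℕ → Prop) [DecidablePred c] {n : ℕ} (hn : 1 ≤ n)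
    (t : ℕ) :
    μ.real {ω | c (S 0 ω) ∧ renewalTime S n ω = t} =
      ∑ s ∈ range (t + 1), if c s then
        μ.real {ω | S 0 ω = s} * μ.real {ω | renewalTime S (n - 1) ω = t - s} else 0 := by
  have := hindep.isProbabilityMeasure
  obtain ⟨m, rfl⟩ : ∃ m, n = m + 1 := ⟨n - 1, by omega⟩
  have hset : {ω | c (S 0 ω) ∧ renewalTime S (m + 1) ω = t} =
      ⋃ s ∈ {s ∈ range (t + 1) | c s}, {ω | S 0 ω = s ∧ renewalTime S (m + 1) ω = t} := by
    ext ω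
    simp only [renewalTime, sum_range_succ', Set.mem_ofPred_eq, Set.mem_iUnion, mem_filter,
      mem_range, exists_prop]
    constructor
    · rintro ⟨hc, ht⟩; exact ⟨S 0 ω, ⟨by omega, hc⟩, rfl, ht⟩
    · rintro ⟨s, ⟨-, hc⟩, rfl, ht⟩; exact ⟨hc, ht⟩
  rw [hset, measureReal_biUnion_finset, sum_filter]
  · refine sum_congr rfl fun s hs => ?_
    split_ifs
    · exact measureReal_eq_and_renewalTime_succ_eq hmeas hindep hident
        (Nat.lt_succ_iff.1 (mem_range.1 hs)) m
    · rfl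
  · intro a _ b _ hab
    exact Set.disjoint_left.2 fun ω ha hb => hab (ha.1.symm.trans hb.1)
  · exact fun s _ => (hmeas 0 (measurableSet_singleton s)).inter
      (measurable_renewalTime hmeas _ (measurableSet_singleton t))

end IID

section Expectations

variable [MeasurableSpace Ω] {μ : Measure Ω} {S : ℕ → Ω → ℕ} (hmeas : ∀ i, Measurable (S i))
include hmeas

theorem measurableSet_and_renewalTime_eq (c : ℕ → Prop) (j n t : ℕ) :
    MeasurableSet {ω | c (S j ω) ∧ renewalTime S n ω = t} :=
  (hmeas j (MeasurableSet.of_discrete (s := {x | c x}))).inter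
    (measurable_renewalTime hmeas n (measurableSet_singleton t))

theorem integral_ite_mul_renewalCount_mul_renewalHit [IsFiniteMeasure μ]
    (hpos : ∀ i ω, 1 ≤ S i ω) (c : ℕ → Prop) [DecidablePred c] (t : ℕ) :
    ∫ ω, (if c (S 0 ω) then (1 : ℝ) else 0) * renewalCount S t ω * renewalHit S t ω ∂μ =
      ∑ n ∈ Icc 1 t, (n : ℝ) * μ.real {ω | c (S 0 ω) ∧ renewalTime S n ω = t} := by
  have h : ∀ ω, (if c (S 0 ω) then (1 : ℝ) else 0) * renewalCount S t ω * renewalHit S t ω =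
      ∑ n ∈ Icc 1 t, (n : ℝ) * if c (S 0 ω) ∧ renewalTime S n ω = t then 1 else 0 := fun ω => by
    rw [mul_assoc, renewalCount_mul_renewalHit hpos, mul_sum]
    exact sum_congr rfl fun n _ => by rw [mul_left_comm, ite_zero_mul_ite_zero, one_mul]
  rw [integral_congr_ae (ae_of_all _ h)]
  exact integral_sum_mul_ite _ _ fun n => measurableSet_and_renewalTime_eq hmeas c 0 n t

theorem integral_ite_mul_renewalHit [IsFiniteMeasure μ] (c : ℕ → Prop) [DecidablePred c]
    (t : ℕ) :
    ∫ ω, (if c (S 0 ω) then (1 : ℝ) else 0) * renewalHit S t ω ∂μ =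
      ∑ n ∈ Icc 1 t, μ.real {ω | c (S 0 ω) ∧ renewalTime S n ω = t} := by
  have h : ∀ ω, (if c (S 0 ω) then (1 : ℝ) else 0) * renewalHit S t ω =
      ∑ n ∈ Icc 1 t, 1 * if c (S 0 ω) ∧ renewalTime S n ω = t then 1 else 0 := fun ω => by
    rw [renewalHit, mul_sum]
    exact sum_congr rfl fun n _ => by rw [ite_zero_mul_ite_zero, one_mul, one_mul]
  rw [integral_congr_ae (ae_of_all _ h),
    integral_sum_mul_ite _ _ fun n => measurableSet_and_renewalTime_eq hmeas c 0 n t]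
  simp only [one_mul]

theorem integral_ite_mul_renewalCount_mul_renewalHit_of_iff_or [IsFiniteMeasure μ]
    (hpos : ∀ i ω, 1 ≤ S i ω) {c c₁ c₂ : ℕ → Prop} [DecidablePred c] [DecidablePred c₁]
    [DecidablePred c₂] (hc : ∀ s, c s ↔ c₁ s ∨ c₂ s) (hdisj : ∀ s, c₁ s → ¬ c₂ s) (t : ℕ) :
    ∫ ω, (if c (S 0 ω) then (1 : ℝ) else 0) * renewalCount S t ω * renewalHit S t ω ∂μ =
      ∫ ω, (if c₁ (S 0 ω) then (1 : ℝ) else 0) * renewalCount S t ω * renewalHit S t ω ∂μ +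
        ∫ ω, (if c₂ (S 0 ω) then (1 : ℝ) else 0) * renewalCount S t ω * renewalHit S t ω ∂μ := by
  simp only [integral_ite_mul_renewalCount_mul_renewalHit hmeas hpos, ← sum_add_distrib,
    ← mul_add]
  refine sum_congr rfl fun n _ => congrArg _ ?_
  rw [← measureReal_union (Set.disjoint_left.2 fun ω h₁ h₂ => hdisj _ h₁.1 h₂.1)
    (measurableSet_and_renewalTime_eq hmeas c₂ 0 n t)]
  congr 1
  ext ω
  simp only [Set.mem_union, Set.mem_ofPred_eq, hc, or_and_right]

variable (hindep : iIndepFun S μ) (hident : ∀ i, μ.map (S i) = μ.map (S 0))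
include hindep hident

theorem integral_ite_mul_ite_renewalTime_eq (c : ℕ → Prop) [DecidablePred c] {j n : ℕ}
    (hj : j < n) (t : ℕ) :
    ∫ ω, (if c (S j ω) then (1 : ℝ) else 0) * (if renewalTime S n ω = t then 1 else 0) ∂μ =
      μ.real {ω | c (S 0 ω) ∧ renewalTime S n ω = t} := by
  simp_rw [ite_zero_mul_ite_zero, one_mul]
  rw [integral_ite_one (measurableSet_and_renewalTime_eq hmeas c j n t), measureReal_def,
    measureReal_def]
  exact congrArg ENNReal.toReal <|
    (identDistrib_prodMk_renewalTime hmeas hindep hident hj).measure_mem_eq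
      (MeasurableSet.of_discrete (s := {p : ℕ × ℕ | c p.1 ∧ p.2 = t}))

theorem integral_ite_mul_renewalCount_mul_renewalHit_eq_sum_add (hpos : ∀ i ω, 1 ≤ S i ω)
    (c : ℕ → Prop) [DecidablePred c] (hc : ∀ s, c s → 1 ≤ s) (t : ℕ) :
    ∫ ω, (if c (S 0 ω) then (1 : ℝ) else 0) * renewalCount S t ω * renewalHit S t ω ∂μ =
      ∑ s ∈ range (t + 1), (if c s then
          (∫ ω, renewalCount S (t - s) ω * renewalHit S (t - s) ω ∂μ) * μ.real {ω | S 0 ω = s}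
          else 0) +
        ∫ ω, (if c (S 0 ω) then (1 : ℝ) else 0) * renewalHit S t ω ∂μ := by
  have := hindep.isProbabilityMeasure
  set q : ℕ → ℕ → ℝ := fun m k => μ.real {ω | renewalTime S m ω = k}
  have hq : ∀ m k, k < m → q m k = 0 := fun m k hkm => by
    have : {ω | renewalTime S m ω = k} = ∅ := Set.eq_empty_of_forall_notMem fun ω h => by
      have := (renewalTime_strictMono hpos ω).le_apply (x := m)
      simp only [Set.mem_ofPred_eq] at h; omega
    simp [q, this]
  have hNU : ∀ k, ∫ ω, renewalCount S k ω * renewalHit S k ω ∂μ =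
      ∑ m ∈ Icc 1 k, (m : ℝ) * q m k := by
    simpa using integral_ite_mul_renewalCount_mul_renewalHit hmeas (μ := μ) hpos (fun _ => True)
  rw [integral_ite_mul_renewalCount_mul_renewalHit hmeas hpos,
    integral_ite_mul_renewalHit hmeas, ← sub_eq_iff_eq_add, ← sum_sub_distrib]
  simp_rw [hNU]
  calc ∑ n ∈ Icc 1 t, ((n : ℝ) * μ.real {ω | c (S 0 ω) ∧ renewalTime S n ω = t} -
        μ.real {ω | c (S 0 ω) ∧ renewalTime S n ω = t})
      = ∑ n ∈ Icc 1 t, ∑ s ∈ range (t + 1),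
          ((n : ℝ) - 1) * if c s then μ.real {ω | S 0 ω = s} * q (n - 1) (t - s) else 0 := by
        refine sum_congr rfl fun n hn => ?_
        rw [← sub_one_mul, measureReal_and_renewalTime_eq_sum hmeas hindep hident c
          (mem_Icc.1 hn).1, mul_sum]
    _ = _ := by
        rw [sum_comm]
        refine sum_congr rfl fun s hs => ?_
        split_ifs with hcs
        · have hst : t - s < t := by have := hc s hcs; have := mem_range.1 hs; omega
          rw [← sum_Icc_pred_mul_eq_of_lt (f := (q · (t - s))) (fun m => hq m _) hst, sum_mul]
          exact sum_congr rfl fun n _ => by ring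
        · simp

end Expectations

end RenewalProcess

theorem stmt_16_general (Ω : Type*) [MeasureSpace Ω] [IsProbabilityMeasure (ℙ : Measure Ω)]
    (S : ℕ → Ω → ℕ) (hmeas : ∀ i, Measurable (S i))
    (hpos : ∀ i ω, 1 ≤ S i ω)
    (hindep : iIndepFun S ℙ)
    (hident : ∀ i, Measure.map (S i) ℙ = Measure.map (S 0) ℙ)
    (po : ℕ → ℝ) (hpo : ∀ s : ℕ, po s = (ℙ (S 0 ⁻¹' {s})).toReal)
    (T : ℕ → Ω → ℕ) (hT : ∀ n ω, T n ω = ∑ i ∈ Finset.range n, S i ω)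
    (N : ℕ → Ω → ℝ) (hN : ∀ t ω, N t ω =
      ∑ n ∈ Finset.Icc 1 t, if T n ω ≤ t then (1 : ℝ) else 0)
    (U : ℕ → Ω → ℝ) (hU : ∀ t ω, U t ω =
      ∑ n ∈ Finset.Icc 1 t, if T n ω = t then (1 : ℝ) else 0)
    (t : ℕ) (γ η : ℝ) (hγ : 0 < γ) (hγη : γ < η) (hη : η < 1) :
    (∑ n ∈ Finset.Icc 1 t, (n : ℝ) *
        ∫ ω, (if γ * t < (S (n - 1) ω : ℝ) then (1 : ℝ) else 0) *
          (if T n ω = t then (1 : ℝ) else 0) ∂ℙ) =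
      (∑' s : ℕ, if γ * t < (s : ℝ) ∧ (s : ℝ) ≤ η * t then
          (∫ ω, N (t - s) ω * U (t - s) ω ∂ℙ) * po s else 0) +
      (∫ ω, (if γ * t < (S 0 ω : ℝ) ∧ (S 0 ω : ℝ) ≤ η * t then (1 : ℝ) else 0) *
          U t ω ∂ℙ) +
      ∫ ω, (if η * t < (S 0 ω : ℝ) then (1 : ℝ) else 0) * N t ω * U t ω ∂ℙ := by
  obtain rfl : T = renewalTime S := funext₂ hT
  obtain rfl : N = renewalCount S := funext₂ hN
  obtain rfl : U = renewalHit S := funext₂ hU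
  obtain rfl : po = fun s => (ℙ : Measure Ω).real {ω | S 0 ω = s} := funext hpo
  have hγt : 0 ≤ γ * t := by positivity
  have hγηt : γ * t ≤ η * t := by gcongr
  have hηt : η * t ≤ t := mul_le_of_le_one_left (Nat.cast_nonneg t) hη.le
  have hmid : ∀ s : ℕ, γ * t < s ∧ (s : ℝ) ≤ η * t → 1 ≤ s := fun s hs => by
    exact_mod_cast hγt.trans_lt hs.1
  calc _ = ∑ n ∈ Icc 1 t, (n : ℝ) *
          (ℙ : Measure Ω).real {ω | γ * t < (S 0 ω : ℝ) ∧ renewalTime S n ω = t} :=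
        sum_congr rfl fun n hn => congrArg _ <|
          integral_ite_mul_ite_renewalTime_eq hmeas hindep hident (fun s : ℕ => γ * t < s)
            (j := n - 1) (by have := (mem_Icc.1 hn).1; omega) t
    _ = ∫ ω, (if γ * t < (S 0 ω : ℝ) then (1 : ℝ) else 0) *
          renewalCount S t ω * renewalHit S t ω :=
        (integral_ite_mul_renewalCount_mul_renewalHit hmeas hpos (fun s : ℕ => γ * t < s) t).symm
    _ = (∫ ω, (if γ * t < (S 0 ω : ℝ) ∧ (S 0 ω : ℝ) ≤ η * t then (1 : ℝ) else 0) *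
            renewalCount S t ω * renewalHit S t ω) +
          ∫ ω, (if η * t < (S 0 ω : ℝ) then (1 : ℝ) else 0) *
            renewalCount S t ω * renewalHit S t ω :=
        integral_ite_mul_renewalCount_mul_renewalHit_of_iff_or (μ := ℙ) hmeas hpos
          (c := fun s : ℕ => γ * t < s) (c₁ := fun s : ℕ => γ * t < s ∧ (s : ℝ) ≤ η * t)
          (c₂ := fun s : ℕ => η * t < s)
          (fun s => by grind) (fun s h h' => by linarith [h.2]) t
    _ = _ := by
        have hreg := integral_ite_mul_renewalCount_mul_renewalHit_eq_sum_add hmeas hindep hident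
          hpos (fun s : ℕ => γ * t < s ∧ (s : ℝ) ≤ η * t) hmid t
        rw [tsum_eq_sum (s := range (t + 1)) fun s hs => if_neg fun h => hs (mem_range.2 ?_), hreg]
        exact Nat.lt_succ_of_le (by exact_mod_cast h.2.trans hηt)

/-- Single-big-jump decomposition: for i.i.d. positive-integer waiting times with law
`p_o`, `t ≥ 2`, and `0 < γ < η < 1`,
`∑_{n=1}^t n E[1{S_n > γt} 1{T_n = t}] =
  ∑_{s ≥ 1} E[N_{t-s} U_{t-s}] 1{γt < s ≤ ηt} p_o(s)
  + E[1{γt < S₁ ≤ ηt} U_t] + E[1{S₁ > ηt} N_t U_t]`. -/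
theorem stmt_16 (Ω : Type*) [MeasureSpace Ω] [IsProbabilityMeasure (ℙ : Measure Ω)]
    (S : ℕ → Ω → ℕ) (hmeas : ∀ i, Measurable (S i))
    (hpos : ∀ i ω, 1 ≤ S i ω)
    (hindep : iIndepFun S ℙ)
    (hident : ∀ i, Measure.map (S i) ℙ = Measure.map (S 0) ℙ)
    (po : ℕ → ℝ) (hpo : ∀ s : ℕ, po s = (ℙ (S 0 ⁻¹' {s})).toReal)
    (T : ℕ → Ω → ℕ) (hT : ∀ n ω, T n ω = ∑ i ∈ Finset.range n, S i ω)
    (N : ℕ → Ω → ℝ) (hN : ∀ t ω, N t ω =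
      ∑ n ∈ Finset.Icc 1 t, if T n ω ≤ t then (1 : ℝ) else 0)
    (U : ℕ → Ω → ℝ) (hU : ∀ t ω, U t ω =
      ∑ n ∈ Finset.Icc 1 t, if T n ω = t then (1 : ℝ) else 0)
    (t : ℕ) (ht : 2 ≤ t) (γ η : ℝ) (hγ : 0 < γ) (hγη : γ < η) (hη : η < 1) :
    (∑ n ∈ Finset.Icc 1 t, (n : ℝ) *
        ∫ ω, (if γ * t < (S (n - 1) ω : ℝ) then (1 : ℝ) else 0) *
          (if T n ω = t then (1 : ℝ) else 0) ∂ℙ) =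
      (∑' s : ℕ, if γ * t < (s : ℝ) ∧ (s : ℝ) ≤ η * t then
          (∫ ω, N (t - s) ω * U (t - s) ω ∂ℙ) * po s else 0) +
      (∫ ω, (if γ * t < (S 0 ω : ℝ) ∧ (S 0 ω : ℝ) ≤ η * t then (1 : ℝ) else 0) *
          U t ω ∂ℙ) +
      ∫ ω, (if η * t < (S 0 ω : ℝ) then (1 : ℝ) else 0) * N t ω * U t ω ∂ℙ :=
  stmt_16_general Ω S hmeas hpos hindep hident po hpo T hT N hN U hU t γ η hγ hγη hη
end

section
/- Exponential tilting bound: suppose z, λ > 0 satisfy E[1{S₁ ≤ γt} e^{z S₁ − λ g(S₁)}] ≤ 1 and (z − αλ)t ≥ ξ + ln ξ with ξ > 1. Then Σ_{n=1}^t E[1{Σ_{i=1}^n g(S_i) ≤ αt} Π_{j=1}^n 1{S_j ≤ γt} 1{T_n = t}] ≤ e^{−ξ}/ξ. -/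
/-!
Put `Y s = 1{s ≤ γt} e^{zs - λ g(s)}` and `M_n = ∏_{j<n} Y(S_j)`. On `{T_n = t}` the Chernoff
inequality gives `1{∑ g(S_i) ≤ αt} ∏ 1{S_j ≤ γt} ≤ e^{(αλ - z)t} M_n`, and the rate condition
gives `e^{(αλ - z)t} ≤ e^{-ξ}/ξ`, so it suffices that `∑_n E[M_n 1{T_n = t}] ≤ 1`.
As `E[Y(S_n)] ≤ 1` and `S_n` is independent of `S_0, …, S_{n-1}`, `M_n` is a supermartingale; since
`T_n` increases strictly, `Q_n = E[M_n 1{T_n ≤ t}]` satisfies `Q_{n+1} + E[M_n 1{T_n = t}] ≤ Q_n`,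
and telescoping from `Q_0 = 1` gives the bound.
-/

open MeasureTheory ProbabilityTheory Finset

section Independence

variable {Ω ι β : Type*} [MeasurableSpace Ω] {μ : Measure Ω} [MeasurableSpace β]
  {f : ι → Ω → β}

lemma ProbabilityTheory.iIndepFun.indepFun_finset_eval (hf : iIndepFun f μ)
    (hmeas : ∀ i, Measurable (f i)) {s : Finset ι} {i : ι} (hi : i ∉ s) :
    IndepFun (fun ω (j : s) => f j ω) (f i) μ :=
  (hf.indepFun_finset s {i} (disjoint_singleton_right.2 hi) hmeas).comp measurable_id
    (measurable_pi_apply (⟨i, mem_singleton_self i⟩ : ({i} : Finset ι)))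

end Independence

section Renewal

variable {Ω : Type*} [MeasurableSpace Ω] {μ : Measure Ω} [IsProbabilityMeasure μ]
  {S : ℕ → Ω → ℕ} {Y : ℕ → ℝ}

lemma integrable_prod_comp (hS : ∀ i, Measurable (S i)) (hY : BddAbove (Set.range fun s => |Y s|))
    (n : ℕ) : Integrable (fun ω => ∏ j ∈ range n, Y (S j ω)) μ := by
  obtain ⟨C, hC⟩ := hY
  induction n with
  | zero => simp
  | succ n ih =>
    simpa only [prod_range_succ, Function.comp_apply] using ih.mul_bdd (c := C)
      ((measurable_of_countable Y).comp (hS n)).aestronglyMeasurable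
      (ae_of_all _ fun ω => hC ⟨S n ω, rfl⟩)

lemma integrable_prod_comp_mul_ite (hS : ∀ i, Measurable (S i))
    (hY : BddAbove (Set.range fun s => |Y s|)) (n : ℕ) (p : ℕ → Prop) [DecidablePred p] :
    Integrable (fun ω => (∏ j ∈ range n, Y (S j ω)) *
      if p (∑ j ∈ range n, S j ω) then 1 else 0) μ :=
  (integrable_prod_comp hS hY n).mul_bdd (c := 1)
    ((measurable_of_countable fun k => if p k then (1 : ℝ) else 0).comp
      (measurable_sum _ fun j _ => hS j)).aestronglyMeasurable
    (ae_of_all _ fun ω => by split_ifs <;> simp)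

lemma integral_prod_comp_mul_ite_succ_add_le (hS : ∀ i, Measurable (S i)) (hind : iIndepFun S μ)
    (hpos : ∀ i ω, 1 ≤ S i ω) (hY0 : ∀ s, 0 ≤ Y s) (hY : BddAbove (Set.range fun s => |Y s|))
    (hY1 : ∀ i, ∫ ω, Y (S i ω) ∂μ ≤ 1) (n t : ℕ) :
    (∫ ω, (∏ j ∈ range (n + 1), Y (S j ω)) *
        (if ∑ j ∈ range (n + 1), S j ω ≤ t then 1 else 0) ∂μ) +
      ∫ ω, (∏ j ∈ range n, Y (S j ω)) * (if ∑ j ∈ range n, S j ω = t then 1 else 0) ∂μ ≤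
    ∫ ω, (∏ j ∈ range n, Y (S j ω)) * (if ∑ j ∈ range n, S j ω ≤ t then 1 else 0) ∂μ := by
  set A : Ω → ℝ := fun ω =>
    (∏ j ∈ range n, Y (S j ω)) * if ∑ j ∈ range n, S j ω < t then 1 else 0 with hA_def
  have hA : Integrable A μ := integrable_prod_comp_mul_ite hS hY n (· < t)
  have hA0 : ∀ ω, 0 ≤ A ω := fun ω => by
    have := prod_nonneg fun j (_ : j ∈ range n) => hY0 (S j ω)
    positivity
  have hsplit : ∫ ω, (∏ j ∈ range n, Y (S j ω)) *
      (if ∑ j ∈ range n, S j ω ≤ t then 1 else 0) ∂μ =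
      (∫ ω, A ω ∂μ) +
        ∫ ω, (∏ j ∈ range n, Y (S j ω)) * (if ∑ j ∈ range n, S j ω = t then 1 else 0) ∂μ := by
    rw [← integral_add hA (integrable_prod_comp_mul_ite hS hY n (· = t))]
    refine integral_congr_ae (ae_of_all _ fun ω => ?_)
    simp only [hA_def]
    split_ifs <;> first | omega | simp
  have hfactor : ∫ ω, A ω * Y (S n ω) ∂μ = (∫ ω, A ω ∂μ) * ∫ ω, Y (S n ω) ∂μ := by
    have hAY : IndepFun A (fun ω => Y (S n ω)) μ := by
      refine ((hind.indepFun_finset_eval hS (s := range n) (i := n) (by simp)).comp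
        (measurable_of_countable fun v : range n → ℕ =>
          (∏ j, Y (v j)) * if ∑ j, v j < t then (1 : ℝ) else 0) (measurable_of_countable Y)).congr
        (ae_of_all _ fun ω => ?_) (ae_of_all _ fun ω => rfl)
      simp only [Function.comp_apply, hA_def, prod_coe_sort (range n) fun j => Y (S j ω),
        sum_coe_sort (range n) fun j => S j ω]
    exact hAY.integral_fun_mul_eq_mul_integral hA.aestronglyMeasurable
      ((measurable_of_countable Y).comp (hS n)).aestronglyMeasurable
  have hmono : ∫ ω, (∏ j ∈ range (n + 1), Y (S j ω)) *
      (if ∑ j ∈ range (n + 1), S j ω ≤ t then 1 else 0) ∂μ ≤ ∫ ω, A ω * Y (S n ω) ∂μ := by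
    have ⟨C, hC⟩ := hY
    refine integral_mono (integrable_prod_comp_mul_ite hS hY (n + 1) (· ≤ t)) (hA.mul_bdd (c := C)
      ((measurable_of_countable Y).comp (hS n)).aestronglyMeasurable
      (ae_of_all _ fun ω => hC ⟨S n ω, rfl⟩)) fun ω => ?_
    -- `T_{n+1} ≤ t` forces `T_n < t` because `S_n ≥ 1`
    have := hpos n ω
    have hMY : 0 ≤ (∏ j ∈ range n, Y (S j ω)) * Y (S n ω) :=
      mul_nonneg (prod_nonneg fun j _ => hY0 _) (hY0 _)
    simp only [hA_def, prod_range_succ, sum_range_succ]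
    split_ifs <;> simp only [mul_zero, mul_one, zero_mul] <;> first | omega | linarith
  have hshrink : (∫ ω, A ω ∂μ) * ∫ ω, Y (S n ω) ∂μ ≤ ∫ ω, A ω ∂μ :=
    mul_le_of_le_one_right (integral_nonneg hA0) (hY1 n)
  linarith

lemma sum_integral_prod_comp_mul_ite_eq_le_one (hS : ∀ i, Measurable (S i))
    (hind : iIndepFun S μ) (hpos : ∀ i ω, 1 ≤ S i ω) (hY0 : ∀ s, 0 ≤ Y s)
    (hY : BddAbove (Set.range fun s => |Y s|)) (hY1 : ∀ i, ∫ ω, Y (S i ω) ∂μ ≤ 1) (t N : ℕ) :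
    ∑ n ∈ range N,
      ∫ ω, (∏ j ∈ range n, Y (S j ω)) * (if ∑ j ∈ range n, S j ω = t then 1 else 0) ∂μ ≤ 1 := by
  have htelescope : ∀ N, (∑ n ∈ range N,
      ∫ ω, (∏ j ∈ range n, Y (S j ω)) * (if ∑ j ∈ range n, S j ω = t then 1 else 0) ∂μ) +
      ∫ ω, (∏ j ∈ range N, Y (S j ω)) * (if ∑ j ∈ range N, S j ω ≤ t then 1 else 0) ∂μ ≤ 1 := by
    intro N
    induction N with
    | zero => simp
    | succ N ih =>
      rw [sum_range_succ]
      linarith [integral_prod_comp_mul_ite_succ_add_le hS hind hpos hY0 hY hY1 N t]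
  have hrest : 0 ≤ ∫ ω, (∏ j ∈ range N, Y (S j ω)) *
      (if ∑ j ∈ range N, S j ω ≤ t then 1 else 0) ∂μ :=
    integral_nonneg fun ω => mul_nonneg (prod_nonneg fun j _ => hY0 _) (by split_ifs <;> norm_num)
  linarith [htelescope N]

end Renewal

section Tilt

noncomputable def tiltWeight (b z lam : ℝ) (g : ℕ → ℝ) (s : ℕ) : ℝ :=
  if (s : ℝ) ≤ b then Real.exp (z * s - lam * g s) else 0

variable {b z lam : ℝ} {g : ℕ → ℝ}

lemma tiltWeight_nonneg (s : ℕ) : 0 ≤ tiltWeight b z lam g s := by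
  unfold tiltWeight
  positivity

lemma bddAbove_range_abs_tiltWeight :
    BddAbove (Set.range fun s => |tiltWeight b z lam g s|) := by
  refine (((range (⌊b⌋₊ + 1)).finite_toSet.image
    fun s => |tiltWeight b z lam g s|).insert 0).bddAbove.mono ?_
  rintro _ ⟨s, rfl⟩
  by_cases hs : (s : ℝ) ≤ b
  · exact Or.inr ⟨s, by simpa [Nat.lt_succ_iff] using Nat.le_floor hs, rfl⟩
  · simp [tiltWeight, hs]

lemma prod_tiltWeight {ι : Type*} (s : Finset ι) (x : ι → ℕ) :
    ∏ j ∈ s, tiltWeight b z lam g (x j) =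
      (∏ j ∈ s, if (x j : ℝ) ≤ b then 1 else 0) *
        Real.exp (z * ∑ j ∈ s, (x j : ℝ) - lam * ∑ j ∈ s, g (x j)) := by
  rw [mul_sum, mul_sum, ← sum_sub_distrib, Real.exp_sum, ← prod_mul_distrib]
  refine prod_congr rfl fun j _ => ?_
  unfold tiltWeight
  split_ifs <;> simp

lemma ite_le_exp_mul_sub (hlam : 0 ≤ lam) (x c : ℝ) :
    (if x ≤ c then (1 : ℝ) else 0) ≤ Real.exp (lam * (c - x)) := by
  split_ifs with h
  · exact Real.one_le_exp (mul_nonneg hlam (sub_nonneg.2 h))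
  · exact (Real.exp_pos _).le

lemma ite_sum_le_mul_prod_ite_mul_ite_eq_le {ι : Type*} (hlam : 0 ≤ lam) (s : Finset ι)
    (x : ι → ℕ) (a : ℝ) (t : ℕ) :
    (if ∑ i ∈ s, g (x i) ≤ a then (1 : ℝ) else 0) *
        (∏ j ∈ s, if (x j : ℝ) ≤ b then (1 : ℝ) else 0) *
        (if ∑ i ∈ s, x i = t then (1 : ℝ) else 0) ≤
      Real.exp (lam * a - z * t) *
        ((∏ j ∈ s, tiltWeight b z lam g (x j)) * if ∑ i ∈ s, x i = t then 1 else 0) := by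
  by_cases ht : ∑ i ∈ s, x i = t
  · have htR : ∑ i ∈ s, (x i : ℝ) = t := by exact_mod_cast ht
    have hP : 0 ≤ ∏ j ∈ s, if (x j : ℝ) ≤ b then (1 : ℝ) else 0 :=
      prod_nonneg fun j _ => by positivity
    simp only [ht, if_true, mul_one, prod_tiltWeight, htR]
    calc (if ∑ i ∈ s, g (x i) ≤ a then (1 : ℝ) else 0) *
          ∏ j ∈ s, (if (x j : ℝ) ≤ b then (1 : ℝ) else 0)
        ≤ Real.exp (lam * (a - ∑ i ∈ s, g (x i))) *
          ∏ j ∈ s, (if (x j : ℝ) ≤ b then (1 : ℝ) else 0) :=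
          mul_le_mul_of_nonneg_right (ite_le_exp_mul_sub hlam _ _) hP
      _ = _ := by
          rw [mul_left_comm, ← Real.exp_add]
          ring_nf
  · simp [ht]

end Tilt

lemma Real.exp_neg_le_exp_neg_div {ξ r : ℝ} (hξ : 0 < ξ) (h : ξ + Real.log ξ ≤ r) :
    Real.exp (-r) ≤ Real.exp (-ξ) / ξ :=
  calc Real.exp (-r) ≤ Real.exp (-(ξ + Real.log ξ)) := Real.exp_le_exp.2 (neg_le_neg h)
    _ = Real.exp (-ξ) / ξ := by
      rw [neg_add, Real.exp_add, Real.exp_neg (Real.log ξ), Real.exp_log hξ, div_eq_mul_inv]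

theorem stmt_17_general (Ω : Type*) [MeasureSpace Ω] [IsProbabilityMeasure (ℙ : Measure Ω)]
    (S : ℕ → Ω → ℕ) (hmeas : ∀ i, Measurable (S i))
    (hpos : ∀ i ω, 1 ≤ S i ω)
    (hindep : iIndepFun S ℙ)
    (hident : ∀ i, Measure.map (S i) ℙ = Measure.map (S 0) ℙ)
    (g : ℕ → ℝ) (α γ : ℝ)
    (t : ℕ)
    (z lam ξ : ℝ) (hlam : 0 < lam) (hξ : 1 < ξ)
    (htilt : (∫ ω, (if (S 0 ω : ℝ) ≤ γ * t then
        Real.exp (z * S 0 ω - lam * g (S 0 ω)) else 0) ∂ℙ) ≤ 1)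
    (hrate : ξ + Real.log ξ ≤ (z - α * lam) * t) :
    (∑ n ∈ Finset.Icc 1 t,
      ∫ ω, (if (∑ i ∈ Finset.range n, g (S i ω)) ≤ α * t then (1 : ℝ) else 0) *
        (∏ j ∈ Finset.range n, if (S j ω : ℝ) ≤ γ * t then (1 : ℝ) else 0) *
        (if (∑ i ∈ Finset.range n, S i ω) = t then (1 : ℝ) else 0) ∂ℙ) ≤
      Real.exp (-ξ) / ξ := by
  set Y := tiltWeight (γ * t) z lam g
  have hY1 : ∀ i, ∫ ω, Y (S i ω) ≤ 1 := fun i => by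
    have hYm : AEStronglyMeasurable Y (Measure.map (S i) ℙ) :=
      (measurable_of_countable Y).aestronglyMeasurable
    rwa [← integral_map (hmeas i).aemeasurable hYm, hident i,
      integral_map (hmeas 0).aemeasurable (hident i ▸ hYm)]
  have hmass := sum_integral_prod_comp_mul_ite_eq_le_one hmeas hindep hpos tiltWeight_nonneg
    bddAbove_range_abs_tiltWeight hY1 t (t + 1)
  calc _ ≤ ∑ n ∈ Icc 1 t, Real.exp (lam * (α * t) - z * t) *
        ∫ ω, (∏ j ∈ range n, Y (S j ω)) * (if ∑ j ∈ range n, S j ω = t then 1 else 0) := by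
        refine sum_le_sum fun n _ => ?_
        rw [← integral_const_mul]
        refine integral_mono_of_nonneg (ae_of_all _ fun ω => ?_)
          ((integrable_prod_comp_mul_ite hmeas bddAbove_range_abs_tiltWeight n (· = t)).const_mul _)
          (ae_of_all _ fun ω => ?_)
        · exact mul_nonneg (mul_nonneg (by split_ifs <;> norm_num)
            (prod_nonneg fun j _ => by split_ifs <;> norm_num)) (by split_ifs <;> norm_num)
        · exact ite_sum_le_mul_prod_ite_mul_ite_eq_le hlam.le (range n) (fun j => S j ω) _ t
    _ ≤ Real.exp (lam * (α * t) - z * t) * 1 := by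
        rw [← mul_sum]
        gcongr
        refine (sum_le_sum_of_subset_of_nonneg ?_ fun n _ _ => ?_).trans hmass
        · intro n hn
          simp only [mem_Icc, mem_range] at hn ⊢
          omega
        · exact integral_nonneg fun ω =>
            mul_nonneg (prod_nonneg fun j _ => tiltWeight_nonneg _) (by split_ifs <;> norm_num)
    _ ≤ Real.exp (-ξ) / ξ := by
        rw [mul_one, show lam * (α * t) - z * t = -((z - α * lam) * t) by ring]
        exact Real.exp_neg_le_exp_neg_div (by linarith) hrate

/-- Exponential tilting bound: if `z, λ > 0` satisfy
`E[1{S₁ ≤ γt} e^{z S₁ - λ g(S₁)}] ≤ 1` and `(z - α λ) t ≥ ξ + ln ξ` with `ξ > 1`, then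
`∑_{n=1}^t E[1{∑_{i=1}^n g(Sᵢ) ≤ αt} ∏_{j=1}^n 1{S_j ≤ γt} 1{T_n = t}] ≤ e^{-ξ}/ξ`. -/
theorem stmt_17 (Ω : Type*) [MeasureSpace Ω] [IsProbabilityMeasure (ℙ : Measure Ω)]
    (S : ℕ → Ω → ℕ) (hmeas : ∀ i, Measurable (S i))
    (hpos : ∀ i ω, 1 ≤ S i ω)
    (hindep : iIndepFun S ℙ)
    (hident : ∀ i, Measure.map (S i) ℙ = Measure.map (S 0) ℙ)
    (g : ℕ → ℝ) (α γ : ℝ) (hα : α ∈ Set.Ioo (0 : ℝ) 1) (hγ : γ ∈ Set.Ioo (0 : ℝ) 1)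
    (t : ℕ) (ht : 1 ≤ t)
    (z lam ξ : ℝ) (hz : 0 < z) (hlam : 0 < lam) (hξ : 1 < ξ)
    (htilt : (∫ ω, (if (S 0 ω : ℝ) ≤ γ * t then
        Real.exp (z * S 0 ω - lam * g (S 0 ω)) else 0) ∂ℙ) ≤ 1)
    (hrate : ξ + Real.log ξ ≤ (z - α * lam) * t) :
    (∑ n ∈ Finset.Icc 1 t,
      ∫ ω, (if (∑ i ∈ Finset.range n, g (S i ω)) ≤ α * t then (1 : ℝ) else 0) *
        (∏ j ∈ Finset.range n, if (S j ω : ℝ) ≤ γ * t then (1 : ℝ) else 0) *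
        (if (∑ i ∈ Finset.range n, S i ω) = t then (1 : ℝ) else 0) ∂ℙ) ≤
      Real.exp (-ξ) / ξ :=
  stmt_17_general Ω S hmeas hpos hindep hident g α γ t z lam ξ hlam hξ htilt hrate
end
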